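/- arXiv:1109.1258 — 2 statements merged into one kernel-verified Lean document; each statement's English description precedes it below -/
import Mathlib

section
/- Let k > d > 0 and let f ∈ K[y₁,…,y_d] be any polynomial satisfying f(𝔱₁,…,𝔱_d) = 𝔱_k in K[x₁,…,x_d]. Then every monomial y₁^{σ₁}⋯y_d^{σ_d} occurring with nonzero coefficient in f satisfies Σ_{i=1}^d i·σ_i ≡ k (mod 2). (This is the parity property of the reduction polynomials f_{k,d}.) -/
open scoped BigOperators

noncomputable section

/-- The field `K = ℚ(s₁,s₂)`, the fraction field of `ℚ[s₁,s₂]`. -/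
abbrev Kf : Type := FractionRing (MvPolynomial (Fin 2) ℚ)

def s₁ : Kf := algebraMap (MvPolynomial (Fin 2) ℚ) Kf (MvPolynomial.X 0)
def s₂ : Kf := algebraMap (MvPolynomial (Fin 2) ℚ) Kf (MvPolynomial.X 1)

/-- The power sum `𝔭_n = x₁^n + ⋯ + x_d^n` in `K[x₁,…,x_d]`. -/
def powSum (d n : ℕ) : MvPolynomial (Fin d) Kf := ∑ i : Fin d, MvPolynomial.X i ^ n

/-- The formal exponential `exp (z s) = Σ_{n≥0} s^n z^n / n!` as a power series in `z`
with coefficients in `K[x₁,…,x_d]`. -/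
def expS (d : ℕ) (s : Kf) : PowerSeries (MvPolynomial (Fin d) Kf) :=
  PowerSeries.mk fun n => MvPolynomial.C (s ^ n / (n.factorial : Kf))

/-- The power series `Σ_{n≥0} 𝔭_n z^n / n!`. -/
def psumS (d : ℕ) : PowerSeries (MvPolynomial (Fin d) Kf) :=
  PowerSeries.mk fun n => MvPolynomial.C ((n.factorial : Kf)⁻¹) * powSum d n

/-- The defining identity of the family `𝔱`:
`Σ_{k≥0} 𝔱_k z^{k+2} = (1/(s₁s₂)) (1 − e^{z s₁})(1 − e^{z s₂}) Σ_{n≥0} 𝔭_n z^n/n!`. -/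
def IsTFamily (d : ℕ) (t : ℕ → MvPolynomial (Fin d) Kf) : Prop :=
  (PowerSeries.mk fun m => if 2 ≤ m then t (m - 2) else 0) =
    PowerSeries.C (MvPolynomial.C (1 / (s₁ * s₂)) : MvPolynomial (Fin d) Kf) *
      ((1 - expS d s₁) * (1 - expS d s₂) * psumS d)


section Stmt4AuxSection

namespace Stmt4Aux

lemma s₁_ne_zero : s₁ ≠ 0 := by
  simpa [s₁, IsFractionRing.to_map_eq_zero_iff] using MvPolynomial.X_ne_zero (R := ℚ) (0 : Fin 2)

lemma s₂_ne_zero : s₂ ≠ 0 := by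
  simpa [s₂, IsFractionRing.to_map_eq_zero_iff] using MvPolynomial.X_ne_zero (R := ℚ) (1 : Fin 2)

/-- scalar exponential series -/
def E (s : Kf) : PowerSeries Kf := PowerSeries.mk fun n => s ^ n / (n.factorial : Kf)

lemma coeff_E (s : Kf) (n : ℕ) : PowerSeries.coeff n (E s) = s ^ n / (n.factorial : Kf) :=
  PowerSeries.coeff_mk _ _

lemma E_zero : E 0 = 1 := by
  ext n
  rw [coeff_E]
  cases n with
  | zero => simp
  | succ m => simp [PowerSeries.coeff_one]

lemma E_mul (s t : Kf) : E s * E t = E (s + t) := by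
  ext n
  rw [PowerSeries.coeff_mul, coeff_E, Finset.Nat.sum_antidiagonal_eq_sum_range_succ_mk, add_pow,
    Finset.sum_div]
  refine Finset.sum_congr rfl fun m hm => ?_
  rw [Finset.mem_range, Nat.lt_succ_iff] at hm
  rw [coeff_E, coeff_E]
  have h1 : (m.factorial : Kf) ≠ 0 := Nat.cast_ne_zero.mpr m.factorial_ne_zero
  have h2 : ((n - m).factorial : Kf) ≠ 0 := Nat.cast_ne_zero.mpr (n - m).factorial_ne_zero
  have h3 : (n.factorial : Kf) ≠ 0 := Nat.cast_ne_zero.mpr n.factorial_ne_zero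
  have key : ((n.choose m : ℕ) : Kf) * m.factorial * (n - m).factorial = n.factorial := by
    have h := Nat.add_choose_mul_factorial_mul_factorial m (n - m)
    rw [Nat.add_sub_cancel' hm] at h
    have hc : n.choose (n - m) = n.choose m := Nat.choose_symm hm
    rw [hc] at h
    exact_mod_cast h
  have h4 : ((n.choose m : ℕ) : Kf) ≠ 0 := Nat.cast_ne_zero.mpr (Nat.choose_pos hm).ne'
  rw [div_mul_div_comm, ← key]
  field_simp

end Stmt4Aux

section P2
namespace Stmt4Aux

open MvPolynomial

/-- the scalar series `(1/(s₁s₂))(1-e^{zs₁})(1-e^{zs₂})` -/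
def V : PowerSeries Kf :=
  PowerSeries.C (R := Kf) (1 / (s₁ * s₂)) * ((1 - E s₁) * (1 - E s₂))

def a (n : ℕ) : Kf := PowerSeries.coeff n V

lemma coeff_one_sub_E (s : Kf) (n : ℕ) :
    PowerSeries.coeff n (1 - E s) = (if n = 0 then 1 else 0) - s ^ n / n.factorial := by
  rw [map_sub, coeff_E, PowerSeries.coeff_one]

lemma a_zero : a 0 = 0 := by
  simp [a, V, PowerSeries.coeff_zero_eq_constantCoeff, map_mul, map_sub, map_one, E,
    PowerSeries.constantCoeff_mk]

lemma a_one : a 1 = 0 := by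
  rw [a, V, PowerSeries.coeff_mul]
  rw [show (1 : ℕ) = 0 + 1 by rfl]
  rw [Finset.Nat.sum_antidiagonal_eq_sum_range_succ_mk]
  simp only [Finset.sum_range_succ, Finset.sum_range_zero]
  rw [PowerSeries.coeff_mul, PowerSeries.coeff_mul]
  simp [Finset.Nat.sum_antidiagonal_eq_sum_range_succ_mk, Finset.sum_range_succ,
    coeff_one_sub_E]

lemma a_two : a 2 = 1 := by
  rw [a, V, PowerSeries.coeff_mul, Finset.Nat.sum_antidiagonal_eq_sum_range_succ_mk]
  simp only [Finset.sum_range_succ, Finset.sum_range_zero]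
  rw [PowerSeries.coeff_mul, PowerSeries.coeff_mul, PowerSeries.coeff_mul]
  simp only [Finset.Nat.sum_antidiagonal_eq_sum_range_succ_mk, Finset.sum_range_succ,
    Finset.sum_range_zero, coeff_one_sub_E]
  norm_num
  field_simp
  rw [mul_comm s₂ s₁, div_self (mul_ne_zero s₁_ne_zero s₂_ne_zero)]

variable {d : ℕ}

lemma expS_eq_map (s : Kf) :
    expS d s = PowerSeries.map (MvPolynomial.C (σ := Fin d)) (E s) := by
  ext n
  rw [PowerSeries.coeff_map, coeff_E]
  simp [expS, div_eq_mul_inv]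

lemma rhs_eq (dd : ℕ) :
    PowerSeries.C (R := MvPolynomial (Fin dd) Kf) (MvPolynomial.C (1 / (s₁ * s₂))) *
      ((1 - expS dd s₁) * (1 - expS dd s₂) * psumS dd) =
    PowerSeries.map (MvPolynomial.C (σ := Fin dd)) V * psumS dd := by
  rw [V, expS_eq_map, expS_eq_map, map_mul, map_mul, map_sub, map_sub, map_one,
    PowerSeries.map_C]
  ring

/-- The fundamental formula for t k as a combination of power sums. -/
lemma t_formula (t : ℕ → MvPolynomial (Fin d) Kf) (ht : IsTFamily d t) (k : ℕ) :
    t k = (∑ v ∈ Finset.range k,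
        MvPolynomial.C (a (k + 2 - v) * ((v.factorial : Kf))⁻¹) * powSum d v) +
      MvPolynomial.C ((k.factorial : Kf))⁻¹ * powSum d k := by
  have h := congrArg (PowerSeries.coeff (R := MvPolynomial (Fin d) Kf) (k + 2)) ht
  rw [PowerSeries.coeff_mk] at h
  simp only [show 2 ≤ k + 2 by omega, if_true, Nat.add_sub_cancel] at h
  rw [rhs_eq] at h
  rw [PowerSeries.coeff_mul, ← Finset.Nat.sum_antidiagonal_swap,
    Finset.Nat.sum_antidiagonal_eq_sum_range_succ_mk] at h
  have hcoeff : ∀ u v : ℕ, (PowerSeries.coeff (R := MvPolynomial (Fin d) Kf) u)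
        (PowerSeries.map (MvPolynomial.C (σ := Fin d)) V) *
      (PowerSeries.coeff (R := MvPolynomial (Fin d) Kf) v) (psumS d) =
      MvPolynomial.C (a u * ((v.factorial : Kf))⁻¹) * powSum d v := by
    intro u v
    rw [PowerSeries.coeff_map, psumS, PowerSeries.coeff_mk, map_mul, ← mul_assoc]
    rfl
  rw [h]
  rw [Finset.sum_range_succ, Finset.sum_range_succ, Finset.sum_range_succ]
  simp only [Prod.swap_prod_mk]
  rw [hcoeff, hcoeff, hcoeff]
  rw [show k + 2 - (k + 1) = 1 by omega, show k + 2 - (k + 2) = 0 by omega,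
    show k + 2 - k = 2 by omega, a_zero, a_one, a_two]
  simp only [zero_mul, map_zero, zero_mul, add_zero, one_mul]
  congr 1
  exact Finset.sum_congr rfl fun v hv => by rw [hcoeff]

end Stmt4Aux
end P2

section P3
namespace Stmt4Aux

open MvPolynomial

/-- A surjective ring endomorphism of a Noetherian ring is injective. -/
lemma injective_of_surjective_ringEnd {R : Type*} [CommRing R] [IsNoetherianRing R]
    (f : R →+* R) (hf : Function.Surjective f) : Function.Injective f := by
  let F : ℕ → R →+* R := fun n => Nat.rec (RingHom.id R) (fun _ g => f.comp g) n
  have hFs : ∀ n, Function.Surjective (F n) := by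
    intro n
    induction n with
    | zero => exact Function.surjective_id
    | succ m ih => exact hf.comp ih
  have hmono : Monotone fun n => (RingHom.ker (F n) : Submodule R R) := by
    intro m n hmn
    induction hmn with
    | refl => exact le_rfl
    | step h ih =>
      refine le_trans ih ?_
      intro x hx
      have : F _ x = 0 := hx
      show f (F _ x) = 0
      rw [this, map_zero]
  obtain ⟨N, hN⟩ := monotone_stabilizes_iff_noetherian.mpr inferInstance
    ⟨fun n => (RingHom.ker (F n) : Submodule R R), hmono⟩
  rw [injective_iff_map_eq_zero]
  intro x hx
  obtain ⟨y, rfl⟩ := hFs N x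
  have hy : y ∈ RingHom.ker (F (N + 1)) := by
    show f (F N y) = 0
    exact hx
  have h2 : (RingHom.ker (F N) : Submodule R R) = RingHom.ker (F (N + 1)) :=
    hN (N + 1) (Nat.le_succ N)
  rw [← h2] at hy
  exact hy

variable {d : ℕ} (t : ℕ → MvPolynomial (Fin d) Kf)

/-- evaluation at `t 1, …, t d` -/
def tau : MvPolynomial (Fin d) Kf →ₐ[Kf] MvPolynomial (Fin d) Kf :=
  aeval (fun i : Fin d => t (i.val + 1))

lemma powSum_eq (n : ℕ) : powSum d n = psum (Fin d) Kf n := rfl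

lemma factorial_ne_zero' (n : ℕ) : ((n.factorial : Kf)) ≠ 0 :=
  Nat.cast_ne_zero.mpr n.factorial_ne_zero

lemma psum_mem_range (ht : IsTFamily d t) : ∀ n, n ≤ d → powSum d n ∈ (tau t).range := by
  intro n
  induction n using Nat.strong_induction_on with
  | _ n ih =>
    intro hn
    rcases Nat.eq_zero_or_pos n with rfl | hpos
    · have : powSum d 0 = algebraMap Kf _ (d : Kf) := by
        simp [powSum, algebraMap_eq, map_natCast]
      rw [this]
      exact Subalgebra.algebraMap_mem _ _
    · -- t n ∈ range
      have htn : t n ∈ (tau t).range := by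
        refine ⟨X ⟨n - 1, by omega⟩, ?_⟩
        simp [tau, aeval_X]
        congr 1
        omega
      have hsum : (∑ v ∈ Finset.range n,
          C (a (n + 2 - v) * ((v.factorial : Kf))⁻¹) * powSum d v) ∈ (tau t).range := by
        refine Subalgebra.sum_mem _ fun v hv => ?_
        rw [Finset.mem_range] at hv
        refine Subalgebra.mul_mem _ ?_ (ih v hv (by omega))
        rw [← algebraMap_eq]
        exact Subalgebra.algebraMap_mem _ _
      have hform := t_formula t ht n
      have : C ((n.factorial : Kf))⁻¹ * powSum d n = t n - (∑ v ∈ Finset.range n,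
          C (a (n + 2 - v) * ((v.factorial : Kf))⁻¹) * powSum d v) := by
        rw [hform]; ring
      have hmem : C ((n.factorial : Kf))⁻¹ * powSum d n ∈ (tau t).range := by
        rw [this]; exact Subalgebra.sub_mem _ htn hsum
      have := Subalgebra.mul_mem _ (show (C (n.factorial : Kf) : MvPolynomial (Fin d) Kf)
          ∈ (tau t).range by rw [← algebraMap_eq]; exact Subalgebra.algebraMap_mem _ _) hmem
      rwa [← mul_assoc, ← map_mul, mul_inv_cancel₀ (factorial_ne_zero' n), map_one,
        one_mul] at this

lemma esymm_mem_range (ht : IsTFamily d t) : ∀ n, n ≤ d →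
    esymm (Fin d) Kf n ∈ (tau t).range := by
  intro n
  induction n using Nat.strong_induction_on with
  | _ n ih =>
    intro hn
    rcases Nat.eq_zero_or_pos n with rfl | hpos
    · rw [esymm_zero]; exact Subalgebra.one_mem _
    · have hrec := mul_esymm_eq_sum (Fin d) Kf n
      have hmem : ((n : MvPolynomial (Fin d) Kf) * esymm (Fin d) Kf n) ∈ (tau t).range := by
        rw [hrec]
        refine Subalgebra.mul_mem _ ?_ (Subalgebra.sum_mem _ fun p hp => ?_)
        · exact Subalgebra.pow_mem _ (Subalgebra.neg_mem _ (Subalgebra.one_mem _)) _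
        · simp only [Finset.mem_filter, Finset.mem_antidiagonal] at hp
          refine Subalgebra.mul_mem _ (Subalgebra.mul_mem _
            (Subalgebra.pow_mem _ (Subalgebra.neg_mem _ (Subalgebra.one_mem _)) _)
            (ih p.1 hp.2 (by omega))) ?_
          rw [← powSum_eq]
          exact psum_mem_range t ht p.2 (by have := Finset.HasAntidiagonal.mem_antidiagonal.mp hp.1; omega)
      have hC : ((n : MvPolynomial (Fin d) Kf)) = C ((n : Kf)) := by
        rw [map_natCast]
      have hne : ((n : Kf)) ≠ 0 := Nat.cast_ne_zero.mpr (by omega)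
      have := Subalgebra.mul_mem _ (show (C ((n : Kf))⁻¹ : MvPolynomial (Fin d) Kf)
          ∈ (tau t).range by rw [← algebraMap_eq]; exact Subalgebra.algebraMap_mem _ _) hmem
      rwa [hC, ← mul_assoc, ← map_mul, inv_mul_cancel₀ hne, map_one, one_mul] at this

/-- the t's are symmetric polynomials -/
lemma t_isSymmetric (ht : IsTFamily d t) (k : ℕ) : (t k).IsSymmetric := by
  rw [← mem_symmetricSubalgebra, t_formula t ht k]
  refine Subalgebra.add_mem _ (Subalgebra.sum_mem _ fun v hv => Subalgebra.mul_mem _ ?_ ?_)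
    (Subalgebra.mul_mem _ ?_ ?_) <;> rw [mem_symmetricSubalgebra]
  · exact IsSymmetric.C _
  · exact powSum_eq (d := d) v ▸ psum_isSymmetric _ _ v
  · exact IsSymmetric.C _
  · exact powSum_eq (d := d) k ▸ psum_isSymmetric _ _ k

/-- Main injectivity result: evaluation at `t 1, …, t d` is injective. -/
lemma tau_injective (ht : IsTFamily d t) : Function.Injective (tau t) := by
  -- ε : evaluation at elementary symmetric polynomials
  set εA : MvPolynomial (Fin d) Kf →ₐ[Kf] MvPolynomial (Fin d) Kf :=
    aeval (fun i : Fin d => esymm (Fin d) Kf (i.val + 1)) with hεA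
  have hεinj : Function.Injective εA := by
    have h := esymmAlgHom_injective (σ := Fin d) Kf (n := d) (by simp)
    intro x y hxy
    refine h ?_
    apply Subtype.ext
    rw [esymmAlgHom_apply, esymmAlgHom_apply]
    exact hxy
  -- choose preimages of t (i+1) under εA
  have hchoice : ∀ i : Fin d, ∃ T, εA T = t (i.val + 1) := by
    intro i
    obtain ⟨q, hq⟩ := esymmAlgHom_surjective (σ := Fin d) Kf (n := d) (by simp)
      ⟨t (i.val + 1), t_isSymmetric t ht _⟩
    exact ⟨q, by rw [hεA]; have := congrArg Subtype.val hq; rwa [esymmAlgHom_apply] at this⟩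
  choose T hT using hchoice
  set Φ : MvPolynomial (Fin d) Kf →ₐ[Kf] MvPolynomial (Fin d) Kf := aeval T with hΦ
  have hcomp : εA.comp Φ = tau t := by
    apply algHom_ext
    intro i
    rw [AlgHom.comp_apply, hΦ, aeval_X, hT, tau, aeval_X]
  have hΦsurj : Function.Surjective Φ := by
    have hX : ∀ i : Fin d, X i ∈ Φ.range := by
      intro i
      have he : esymm (Fin d) Kf (i.val + 1) ∈ (tau t).range :=
        esymm_mem_range t ht (i.val + 1) (by omega)
      obtain ⟨b, hb⟩ := he
      rw [← hcomp] at hb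
      refine ⟨b, hεinj ?_⟩
      have h1 : εA (X i) = esymm (Fin d) Kf (i.val + 1) := aeval_X _ i
      exact (show εA (Φ b) = esymm (Fin d) Kf (i.val + 1) from hb).trans h1.symm
    have htop : Φ.range = ⊤ := by
      rw [eq_top_iff, ← adjoin_range_X (R := Kf) (σ := Fin d)]
      refine Algebra.adjoin_le ?_
      rintro x ⟨i, rfl⟩
      exact hX i
    intro x
    have : x ∈ Φ.range := htop ▸ trivial
    exact this
  have hΦinj : Function.Injective Φ :=
    injective_of_surjective_ringEnd Φ.toRingHom hΦsurj
  rw [← hcomp]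
  exact hεinj.comp hΦinj

end Stmt4Aux
end P3

section P4
namespace Stmt4Aux

open MvPolynomial

lemma inv_factorial_choose (n m : ℕ) (hm : m ≤ n) :
    ((n.factorial : Kf))⁻¹ * ((n.choose m : ℕ) : Kf) =
      ((m.factorial : Kf))⁻¹ * (((n - m).factorial : Kf))⁻¹ := by
  have key : ((n.choose m : ℕ) : Kf) * m.factorial * (n - m).factorial = n.factorial := by
    have h := Nat.add_choose_mul_factorial_mul_factorial m (n - m)
    rw [Nat.add_sub_cancel' hm] at h
    rw [Nat.choose_symm hm] at h
    exact_mod_cast h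
  rw [← key]
  have h1 : ((m.factorial : ℕ) : Kf) ≠ 0 := factorial_ne_zero' m
  have h2 : (((n - m).factorial : ℕ) : Kf) ≠ 0 := factorial_ne_zero' (n - m)
  have h3 : ((n.choose m : ℕ) : Kf) ≠ 0 := Nat.cast_ne_zero.mpr (Nat.choose_pos hm).ne'
  field_simp

variable {d : ℕ}

/-- The involution `x_i ↦ -x_i - (s₁+s₂)`. -/
def Theta : MvPolynomial (Fin d) Kf →ₐ[Kf] MvPolynomial (Fin d) Kf :=
  aeval (fun i : Fin d => -X i - C (s₁ + s₂))

lemma Theta_C (c : Kf) : Theta (d := d) (C c) = C c := by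
  rw [Theta, aeval_C, algebraMap_eq]

/-- apply Theta to coefficients then `z ↦ -z` -/
def Psi : PowerSeries (MvPolynomial (Fin d) Kf) →+* PowerSeries (MvPolynomial (Fin d) Kf) :=
  (PowerSeries.rescale (-1)).comp (PowerSeries.map (Theta (d := d)).toRingHom)

lemma coeff_Psi (φ : PowerSeries (MvPolynomial (Fin d) Kf)) (n : ℕ) :
    PowerSeries.coeff n (Psi φ) =
      (-1 : MvPolynomial (Fin d) Kf) ^ n * Theta (PowerSeries.coeff n φ) := by
  rw [Psi, RingHom.comp_apply, PowerSeries.coeff_rescale, PowerSeries.coeff_map]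
  rfl

lemma Psi_C (c : Kf) :
    Psi (PowerSeries.C (R := MvPolynomial (Fin d) Kf) (C c)) =
      PowerSeries.C (R := MvPolynomial (Fin d) Kf) (C c) := by
  refine PowerSeries.ext fun n => ?_
  rw [coeff_Psi, PowerSeries.coeff_C]
  split_ifs with h
  · subst h; simp [Theta_C]
  · simp

lemma Psi_expS (s : Kf) : Psi (expS d s) = expS d (-s) := by
  refine PowerSeries.ext fun n => ?_
  rw [coeff_Psi, expS, expS, PowerSeries.coeff_mk, PowerSeries.coeff_mk, Theta_C]
  rw [show ((-s) ^ n / (n.factorial : Kf)) = (-1 : Kf) ^ n * (s ^ n / (n.factorial : Kf)) by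
    rw [neg_pow]; ring]
  rw [map_mul, map_pow, map_neg, map_one]

lemma expS_mul (s u : Kf) : expS d s * expS d u = expS d (s + u) := by
  rw [expS_eq_map, expS_eq_map, expS_eq_map, ← map_mul, E_mul]

lemma expS_zero : expS d 0 = 1 := by
  rw [expS_eq_map, E_zero, map_one]

lemma binom_term (e : Kf) (n : ℕ) :
    C (σ := Fin d) ((n.factorial : Kf))⁻¹ * (∑ i : Fin d, (X i + C e) ^ n) =
    ∑ m ∈ Finset.range (n + 1),
      C (e ^ m / (m.factorial : Kf)) * (C (((n - m).factorial : Kf))⁻¹ * powSum d (n - m)) := by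
  have step : ∀ i : Fin d, C (σ := Fin d) ((n.factorial : Kf))⁻¹ * (X i + C e) ^ n =
      ∑ m ∈ Finset.range (n + 1),
        C (e ^ m / (m.factorial : Kf)) * (C (((n - m).factorial : Kf))⁻¹ * X i ^ (n - m)) := by
    intro i
    rw [add_comm (X i), add_pow, Finset.mul_sum]
    refine Finset.sum_congr rfl fun m hm => ?_
    rw [Finset.mem_range, Nat.lt_succ_iff] at hm
    have h1 := inv_factorial_choose n m hm
    have hs : ((n.factorial : Kf))⁻¹ * (e ^ m * ((n.choose m : ℕ) : Kf)) =
        e ^ m / (m.factorial : Kf) * (((n - m).factorial : Kf))⁻¹ := by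
      rw [div_eq_mul_inv]
      calc ((n.factorial : Kf))⁻¹ * (e ^ m * ((n.choose m : ℕ) : Kf))
          = e ^ m * (((n.factorial : Kf))⁻¹ * ((n.choose m : ℕ) : Kf)) := by ring
        _ = e ^ m * (((m.factorial : Kf))⁻¹ * (((n - m).factorial : Kf))⁻¹) := by rw [h1]
        _ = e ^ m * ((m.factorial : Kf))⁻¹ * (((n - m).factorial : Kf))⁻¹ := by ring
    calc C (σ := Fin d) ((n.factorial : Kf))⁻¹ * (C e ^ m * X i ^ (n - m) *
          ((n.choose m : ℕ) : MvPolynomial (Fin d) Kf))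
        = C (((n.factorial : Kf))⁻¹ * (e ^ m * ((n.choose m : ℕ) : Kf))) * X i ^ (n - m) := by
          rw [map_mul, map_mul, ← map_pow, map_natCast (C : Kf →+* MvPolynomial (Fin d) Kf)]
          ring
      _ = C (e ^ m / (m.factorial : Kf) * (((n - m).factorial : Kf))⁻¹) * X i ^ (n - m) := by
          rw [hs]
      _ = C (e ^ m / (m.factorial : Kf)) * (C (((n - m).factorial : Kf))⁻¹ * X i ^ (n - m)) := by
          rw [map_mul]; ring
  rw [Finset.mul_sum, Finset.sum_congr rfl fun i _ => step i, Finset.sum_comm]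
  refine Finset.sum_congr rfl fun m _ => ?_
  rw [powSum, Finset.mul_sum, Finset.mul_sum]

lemma Psi_psumS : Psi (psumS d) = expS d (s₁ + s₂) * psumS d := by
  refine PowerSeries.ext fun n => ?_
  rw [coeff_Psi, psumS, PowerSeries.coeff_mk, map_mul, Theta_C]
  have hth : Theta (powSum d n) = ∑ i : Fin d, (-X i - C (s₁ + s₂)) ^ n := by
    rw [powSum, map_sum]
    exact Finset.sum_congr rfl fun i _ => by rw [map_pow, Theta, aeval_X]
  rw [hth, Finset.mul_sum, Finset.mul_sum]
  have hterm : ∀ i : Fin d, (-1 : MvPolynomial (Fin d) Kf) ^ n *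
      (C ((n.factorial : Kf))⁻¹ * (-X i - C (s₁ + s₂)) ^ n) =
      C ((n.factorial : Kf))⁻¹ * (X i + C (s₁ + s₂)) ^ n := by
    intro i
    have h0 : (-X i - C (s₁ + s₂) : MvPolynomial (Fin d) Kf) = -(X i + C (s₁ + s₂)) := by ring
    rw [h0, show (-(X i + C (s₁ + s₂)) : MvPolynomial (Fin d) Kf) ^ n =
      (-1) ^ n * (X i + C (s₁ + s₂)) ^ n by
        rw [show (-(X i + C (s₁ + s₂)) : MvPolynomial (Fin d) Kf) =
          -1 * (X i + C (s₁ + s₂)) by ring, mul_pow]]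
    calc (-1 : MvPolynomial (Fin d) Kf) ^ n * (C ((n.factorial : Kf))⁻¹ *
          ((-1) ^ n * (X i + C (s₁ + s₂)) ^ n))
        = ((-1 : MvPolynomial (Fin d) Kf) * -1) ^ n *
          (C ((n.factorial : Kf))⁻¹ * (X i + C (s₁ + s₂)) ^ n) := by rw [mul_pow]; ring
      _ = C ((n.factorial : Kf))⁻¹ * (X i + C (s₁ + s₂)) ^ n := by norm_num
  rw [Finset.sum_congr rfl fun i _ => hterm i, ← Finset.mul_sum, binom_term]
  rw [PowerSeries.coeff_mul, Finset.Nat.sum_antidiagonal_eq_sum_range_succ_mk]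
  refine (Finset.sum_congr rfl fun m _ => ?_).symm
  simp only [expS, psumS, PowerSeries.coeff_mk]

/-- Parity of the t-family under the involution. -/
lemma Theta_t (t : ℕ → MvPolynomial (Fin d) Kf) (ht : IsTFamily d t) (m : ℕ) :
    Theta (t m) = C ((-1 : Kf) ^ m) * t m := by
  have key : (1 - expS d (-s₁)) * (1 - expS d (-s₂)) * expS d (s₁ + s₂) =
      (1 - expS d s₁) * (1 - expS d s₂) := by
    have h12 : expS d (-s₁) * expS d (-s₂) * expS d (s₁ + s₂) = 1 := by
      rw [expS_mul, expS_mul, show -s₁ + -s₂ + (s₁ + s₂) = 0 by ring, expS_zero]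
    have e1 : expS d (-s₁) * expS d s₁ = 1 := by
      rw [expS_mul, neg_add_cancel, expS_zero]
    have e2 : expS d (-s₂) * expS d s₂ = 1 := by
      rw [expS_mul, neg_add_cancel, expS_zero]
    have o1 : 1 - expS d (-s₁) = -(expS d (-s₁)) * (1 - expS d s₁) := by linear_combination -e1
    have o2 : 1 - expS d (-s₂) = -(expS d (-s₂)) * (1 - expS d s₂) := by linear_combination -e2
    rw [o1, o2]
    linear_combination ((1 - expS d s₁) * (1 - expS d s₂)) * h12
  have hRHS : Psi (PowerSeries.C (R := MvPolynomial (Fin d) Kf) (C (1 / (s₁ * s₂))) *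
      ((1 - expS d s₁) * (1 - expS d s₂) * psumS d)) =
      PowerSeries.C (R := MvPolynomial (Fin d) Kf) (C (1 / (s₁ * s₂))) *
      ((1 - expS d s₁) * (1 - expS d s₂) * psumS d) := by
    rw [map_mul, map_mul, map_mul, map_sub, map_sub, map_one, Psi_C, Psi_expS, Psi_expS,
      Psi_psumS]
    rw [show (1 - expS d (-s₁)) * (1 - expS d (-s₂)) * (expS d (s₁ + s₂) * psumS d) =
      (1 - expS d (-s₁)) * (1 - expS d (-s₂)) * expS d (s₁ + s₂) * psumS d by ring, key]
  have h2 : Psi (PowerSeries.mk fun m => if 2 ≤ m then t (m - 2) else 0) =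
      PowerSeries.mk fun m => if 2 ≤ m then t (m - 2) else 0 :=
    (congrArg Psi ht).trans (hRHS.trans ht.symm)
  have hcoeff := congrArg (PowerSeries.coeff (R := MvPolynomial (Fin d) Kf) (m + 2)) h2
  rw [coeff_Psi] at hcoeff
  simp only [PowerSeries.coeff_mk] at hcoeff
  rw [if_pos (show 2 ≤ m + 2 by omega), Nat.add_sub_cancel] at hcoeff
  have hinv : ((-1 : MvPolynomial (Fin d) Kf)) ^ (m + 2) * (-1) ^ (m + 2) = 1 := by
    rw [← mul_pow]; norm_num
  have h3 : Theta (t m) = (-1 : MvPolynomial (Fin d) Kf) ^ (m + 2) * t m := by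
    calc Theta (t m)
        = ((-1 : MvPolynomial (Fin d) Kf) ^ (m + 2) * (-1) ^ (m + 2)) * Theta (t m) := by
          rw [hinv, one_mul]
      _ = (-1) ^ (m + 2) * ((-1) ^ (m + 2) * Theta (t m)) := by ring
      _ = (-1) ^ (m + 2) * t m := by rw [hcoeff]
  rw [h3, show ((-1 : MvPolynomial (Fin d) Kf)) ^ (m + 2) = C ((-1 : Kf) ^ m) by
    rw [show ((-1 : MvPolynomial (Fin d) Kf)) = C (-1 : Kf) by rw [map_neg, map_one], ← map_pow]
    congr 1
    rw [pow_add, neg_one_sq, mul_one]]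

end Stmt4Aux
end P4

section P5
namespace Stmt4Aux

open MvPolynomial

variable {d : ℕ}

lemma aeval_scale_monomial (w : Fin d → Kf) (τ : Fin d →₀ ℕ) (c : Kf) :
    aeval (fun i : Fin d => C (w i) * X i) (monomial τ c) =
      monomial τ (c * τ.prod fun i e => w i ^ e) := by
  rw [aeval_monomial, algebraMap_eq]
  have h1 : (τ.prod fun i e => (C (w i) * X i : MvPolynomial (Fin d) Kf) ^ e) =
      (τ.prod fun i e => (C (w i ^ e) : MvPolynomial (Fin d) Kf)) *
        τ.prod fun i e => (X i : MvPolynomial (Fin d) Kf) ^ e := by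
    rw [← Finsupp.prod_mul]
    exact Finsupp.prod_congr fun i _ => by rw [mul_pow, map_pow]
  have h2 : (τ.prod fun i e => (C (w i ^ e) : MvPolynomial (Fin d) Kf)) =
      C (τ.prod fun i e => w i ^ e) := by
    rw [Finsupp.prod, Finsupp.prod, map_prod]
  rw [h1, h2, monomial_eq, map_mul]
  ring

lemma coeff_aeval_scale (w : Fin d → Kf) (f : MvPolynomial (Fin d) Kf) (σ : Fin d →₀ ℕ) :
    coeff σ (aeval (fun i : Fin d => C (w i) * X i) f) =
      (σ.prod fun i e => w i ^ e) * coeff σ f := by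
  conv_lhs => rw [f.as_sum, map_sum]
  rw [coeff_sum]
  simp only [aeval_scale_monomial, coeff_monomial]
  rw [Finset.sum_ite_eq' f.support σ (fun τ => coeff τ f * τ.prod fun i e => w i ^ e)]
  split_ifs with h
  · ring
  · rw [notMem_support_iff.mp h, mul_zero]

end Stmt4Aux
end P5


end Stmt4AuxSection

/-- Parity property of the reduction polynomials: if `k > d > 0` and
`f(𝔱₁,…,𝔱_d) = 𝔱_k`, then every monomial `y₁^{σ₁} ⋯ y_d^{σ_d}` occurring in `f` with
nonzero coefficient satisfies `Σ i·σ_i ≡ k (mod 2)`. -/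
theorem stmt4 (d : ℕ) (hd : 0 < d) (t : ℕ → MvPolynomial (Fin d) Kf)
    (ht : IsTFamily d t) (k : ℕ) (hk : d < k)
    (f : MvPolynomial (Fin d) Kf)
    (hf : MvPolynomial.aeval (fun i : Fin d => t (i.val + 1)) f = t k)
    (σ : Fin d →₀ ℕ) (hσ : f.coeff σ ≠ 0) :
    (∑ i : Fin d, (i.val + 1) * σ i) % 2 = k % 2 := by
  classical
  open MvPolynomial Stmt4Aux in
  have hτf : tau t f = t k := hf
  set ρ : MvPolynomial (Fin d) Kf →ₐ[Kf] MvPolynomial (Fin d) Kf :=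
    MvPolynomial.aeval (fun i : Fin d =>
      MvPolynomial.C ((-1 : Kf) ^ (i.val + 1)) * MvPolynomial.X i) with hρ
  have hcomp : (Stmt4Aux.Theta (d := d)).comp (Stmt4Aux.tau t) = (Stmt4Aux.tau t).comp ρ := by
    apply MvPolynomial.algHom_ext
    intro i
    rw [AlgHom.comp_apply, AlgHom.comp_apply, hρ, MvPolynomial.aeval_X]
    rw [Stmt4Aux.tau, MvPolynomial.aeval_X, Stmt4Aux.Theta_t t ht (i.val + 1)]
    rw [map_mul, MvPolynomial.aeval_X, MvPolynomial.aeval_C, MvPolynomial.algebraMap_eq]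
  have key : Stmt4Aux.tau t (ρ f) = Stmt4Aux.tau t (MvPolynomial.C ((-1 : Kf) ^ k) * f) := by
    have h1 : Stmt4Aux.tau t (ρ f) = Stmt4Aux.Theta (Stmt4Aux.tau t f) := by
      rw [← AlgHom.comp_apply, ← hcomp, AlgHom.comp_apply]
    rw [h1, hτf, Stmt4Aux.Theta_t t ht k, map_mul, Stmt4Aux.tau]
    rw [MvPolynomial.aeval_C, MvPolynomial.algebraMap_eq, hf]
  have heq : ρ f = MvPolynomial.C ((-1 : Kf) ^ k) * f :=
    Stmt4Aux.tau_injective t ht key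
  have hc := congrArg (MvPolynomial.coeff σ) heq
  rw [hρ, Stmt4Aux.coeff_aeval_scale, MvPolynomial.coeff_C_mul] at hc
  have hprod : (σ.prod fun i e => ((-1 : Kf) ^ (i.val + 1)) ^ e) =
      (-1 : Kf) ^ (∑ i : Fin d, (i.val + 1) * σ i) := by
    rw [Finsupp.prod_fintype _ _ (fun i => pow_zero _)]
    rw [← Finset.prod_pow_eq_pow_sum]
    exact Finset.prod_congr rfl fun i _ => by rw [← pow_mul]
  rw [hprod] at hc
  have hpow : (-1 : Kf) ^ (∑ i : Fin d, (i.val + 1) * σ i) = (-1 : Kf) ^ k :=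
    mul_right_cancel₀ hσ hc
  rw [neg_one_pow_eq_pow_mod_two, neg_one_pow_eq_pow_mod_two (n := k)] at hpow
  have h2 : (∑ i : Fin d, (i.val + 1) * σ i) % 2 < 2 := Nat.mod_lt _ (by omega)
  have h3 : k % 2 < 2 := Nat.mod_lt _ (by omega)
  rcases Nat.mod_two_eq_zero_or_one (∑ i : Fin d, (i.val + 1) * σ i) with h | h <;>
    rcases Nat.mod_two_eq_zero_or_one k with h' | h' <;>
      rw [h, h'] at hpow ⊢ <;> first | rfl | (exfalso; norm_num at hpow)
end
end

section
/- Let k > d > 0 and let f ∈ K[y₁,…,y_d] be any polynomial satisfying f(𝔱₁,…,𝔱_d) = 𝔱_k in K[x₁,…,x_d]. Then for every monomial y₁^{σ₁}⋯y_d^{σ_d}, its coefficient in f, if nonzero, is a homogeneous rational function in s₁, s₂ of degree k − Σ_{i=1}^d i·σ_i; that is, it can be written as a quotient P/Q of nonzero homogeneous polynomials P, Q ∈ ℚ[s₁,s₂] with deg P − deg Q = k − Σ_{i=1}^d i·σ_i. -/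
open scoped BigOperators

noncomputable section

namespace Stmt5Aux

open MvPolynomial Finset

abbrev R2 : Type := MvPolynomial (Fin 2) ℚ

lemma algR2_injective : Function.Injective (algebraMap R2 Kf) :=
  IsFractionRing.injective _ _

lemma s1_ne_zero : s₁ ≠ 0 := by
  simp only [s₁, Ne, IsFractionRing.to_map_eq_zero_iff]
  exact MvPolynomial.X_ne_zero _

lemma s2_ne_zero : s₂ ≠ 0 := by
  simp only [s₂, Ne, IsFractionRing.to_map_eq_zero_iff]
  exact MvPolynomial.X_ne_zero _

/-- coefficients of `(1-e^{zs₁})(1-e^{zs₂})/(s₁s₂)`. -/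
def γQ (m : ℕ) : Kf := ∑ ab ∈ antidiagonal m,
  s₁ ^ ab.1 * s₂ ^ ab.2 / (((ab.1+1).factorial : Kf) * ((ab.2+1).factorial : Kf))

lemma γQ_zero : γQ 0 = 1 := by
  simp [γQ]


lemma oneSub_expS (d : ℕ) (s : Kf) :
    (1 - expS d s) = PowerSeries.mk
      (fun a => if a = 0 then 0 else -C (s ^ a / (a.factorial : Kf))) := by
  ext n : 1
  simp only [map_sub, PowerSeries.coeff_one, expS, PowerSeries.coeff_mk]
  cases n with
  | zero => simp
  | succ n => simp

lemma prod_oneSub (d : ℕ) :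
    (1 - expS d s₁) * (1 - expS d s₂) =
      PowerSeries.mk (fun m => if 2 ≤ m then C (s₁ * s₂ * γQ (m - 2)) else 0) := by
  rw [oneSub_expS, oneSub_expS]
  ext n : 1
  rw [PowerSeries.coeff_mul, PowerSeries.coeff_mk]
  simp only [PowerSeries.coeff_mk]
  rw [Finset.Nat.sum_antidiagonal_eq_sum_range_succ_mk]
  match n with
  | 0 => simp
  | 1 =>
    rw [if_neg (by omega), Finset.sum_range_succ, Finset.sum_range_succ]
    norm_num
  | (m+2) =>
    rw [if_pos (by omega)]
    rw [Finset.sum_range_succ, Finset.sum_range_succ']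
    simp only [Nat.sub_self, eq_self_iff_true, if_true, zero_mul, mul_zero, add_zero]
    have h2 : (m + 2 - 2 : ℕ) = m := by omega
    rw [h2, γQ, Finset.mul_sum, Finset.Nat.sum_antidiagonal_eq_sum_range_succ_mk, map_sum]
    refine Finset.sum_congr rfl fun a ha => ?_
    rw [Finset.mem_range] at ha
    dsimp only
    rw [if_neg (by omega), if_neg (by omega)]
    have h3 : (m + 2 - (a + 1) : ℕ) = (m - a) + 1 := by omega
    rw [h3, ← map_neg, ← map_neg, ← map_mul]
    congr 1
    field_simp
    ring

lemma coeff_rhs (d : ℕ) (k : ℕ) :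
    (PowerSeries.coeff (k+2)) (PowerSeries.C
        (MvPolynomial.C (1 / (s₁ * s₂)) : MvPolynomial (Fin d) Kf) *
      ((1 - expS d s₁) * (1 - expS d s₂) * psumS d)) =
      ∑ mn ∈ antidiagonal k, C (γQ mn.1 * ((mn.2.factorial : Kf))⁻¹) * powSum d mn.2 := by
  rw [PowerSeries.coeff_C_mul, prod_oneSub, PowerSeries.coeff_mul]
  simp only [PowerSeries.coeff_mk, psumS]
  rw [Finset.mul_sum, Finset.Nat.sum_antidiagonal_eq_sum_range_succ_mk,
    Finset.Nat.sum_antidiagonal_eq_sum_range_succ_mk]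
  rw [Finset.sum_range_succ', Finset.sum_range_succ']
  rw [if_neg (by norm_num), if_neg (by norm_num), zero_mul, mul_zero, zero_mul, mul_zero,
    add_zero, add_zero]
  refine Finset.sum_congr rfl fun a ha => ?_
  rw [Finset.mem_range] at ha
  dsimp only
  rw [if_pos (by omega)]
  have h1 : (a + 1 + 1 - 2 : ℕ) = a := by omega
  have h2 : (k + 2 - (a + 1 + 1) : ℕ) = k - a := by omega
  have h3 : 1 / (s₁ * s₂) * (s₁ * s₂ * γQ a) = γQ a := by
    field_simp
    exact mul_div_cancel_left₀ _ (mul_ne_zero s1_ne_zero s2_ne_zero)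
  rw [h1, h2]
  conv_rhs => rw [map_mul, mul_assoc]
  rw [← mul_assoc, ← map_mul, h3]

lemma tFamily_eq {d : ℕ} {t : ℕ → MvPolynomial (Fin d) Kf} (ht : IsTFamily d t) (k : ℕ) :
    t k = ∑ mn ∈ antidiagonal k, C (γQ mn.1 * ((mn.2.factorial : Kf))⁻¹) * powSum d mn.2 := by
  have h := congrArg (PowerSeries.coeff (k+2)) ht
  rw [PowerSeries.coeff_mk, if_pos (by omega), show k + 2 - 2 = k from rfl,
    coeff_rhs d k] at h
  exact h

/-! ### Rescaling -/

def κ (c : ℚ) : Kf := algebraMap R2 Kf (C c)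

lemma κ_ne_zero {c : ℚ} (hc : c ≠ 0) : κ c ≠ 0 := by
  simp only [κ, Ne, IsFractionRing.to_map_eq_zero_iff]
  exact fun h => hc (by simpa using congrArg (coeff 0) h)

def ρ (c : ℚ) : R2 →ₐ[ℚ] R2 := aeval (fun i : Fin 2 => C c * X i)

lemma ρ_X (c : ℚ) (i : Fin 2) : ρ c (X i) = C c * X i := aeval_X _ _

lemma ρ_comp (c c' : ℚ) (x : R2) : ρ c (ρ c' x) = ρ (c * c') x := by
  rw [← AlgHom.comp_apply]
  apply DFunLike.congr_fun
  apply MvPolynomial.algHom_ext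
  intro i
  simp only [AlgHom.comp_apply, ρ_X]
  rw [map_mul, show ρ c (C c') = algebraMap ℚ R2 c' from aeval_C _ _,
    MvPolynomial.algebraMap_eq, ρ_X, ← mul_assoc, ← map_mul, mul_comm c' c]

lemma ρ_one (x : R2) : ρ 1 x = x := by
  have : ρ (1 : ℚ) = AlgHom.id ℚ R2 := by
    apply MvPolynomial.algHom_ext
    intro i
    simp [ρ_X]
  rw [this]; rfl

lemma ρ_inj {c : ℚ} (hc : c ≠ 0) : Function.Injective (ρ c) := by
  intro x y h
  have h2 := congrArg (ρ c⁻¹) h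
  rwa [ρ_comp, ρ_comp, inv_mul_cancel₀ hc, ρ_one, ρ_one] at h2

lemma ρ_isHomogeneous {c : ℚ} {n : ℕ} {p : R2} (hp : p.IsHomogeneous n) :
    ρ c p = C (c ^ n) * p := by
  conv_lhs => rw [p.as_sum]
  rw [map_sum]
  conv_rhs => rw [p.as_sum, Finset.mul_sum]
  refine Finset.sum_congr rfl fun u hu => ?_
  have hdeg : (u.sum fun _ e => e) = n := by
    rw [← hp (mem_support_iff.1 hu)]; show _ = Finsupp.weight (fun _ => 1) u; rw [← Finsupp.degree_eq_weight_one]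
    rfl
  rw [ρ, aeval_monomial, monomial_eq]
  have h1 : (u.prod fun i k => (C c * X i : R2) ^ k)
      = C (c ^ n) * u.prod fun i k => (X i : R2) ^ k := by
    have : (u.prod fun i k => (C c * X i : R2) ^ k)
        = (u.prod fun i k => (C (c ^ k) : R2)) * u.prod fun i k => (X i : R2) ^ k := by
      rw [← Finsupp.prod_mul]
      refine Finsupp.prod_congr fun i _ => ?_
      rw [mul_pow, map_pow]
    rw [this]
    congr 1
    rw [Finsupp.prod, ← map_prod, Finset.prod_pow_eq_pow_sum]
    exact congrArg C (congrArg (c ^ ·) hdeg)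
  rw [h1, MvPolynomial.algebraMap_eq]
  exact mul_left_comm _ _ _

lemma ψaux (c : ℚ) (hc : c ≠ 0) :
    ∀ y : nonZeroDivisors R2, IsUnit (((algebraMap R2 Kf).comp (ρ c : R2 →+* R2)) y) := by
  intro y
  refine isUnit_iff_ne_zero.2 ?_
  simp only [RingHom.comp_apply]
  rw [Ne, IsFractionRing.to_map_eq_zero_iff]
  intro h
  have hy0 : (y : R2) = 0 := ρ_inj hc (by simpa using h)
  exact mem_nonZeroDivisors_iff_ne_zero.1 y.2 hy0

def ψ (c : ℚ) (hc : c ≠ 0) : Kf →+* Kf := IsLocalization.lift (ψaux c hc)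

lemma ψ_alg (c : ℚ) (hc : c ≠ 0) (x : R2) :
    ψ c hc (algebraMap R2 Kf x) = algebraMap R2 Kf (ρ c x) :=
  IsLocalization.lift_eq _ _

lemma ψ_s1 (c : ℚ) (hc : c ≠ 0) : ψ c hc s₁ = κ c * s₁ := by
  rw [s₁, ψ_alg, ρ_X, map_mul]; rfl

lemma ψ_s2 (c : ℚ) (hc : c ≠ 0) : ψ c hc s₂ = κ c * s₂ := by
  rw [s₂, ψ_alg, ρ_X, map_mul]; rfl

lemma ψ_γQ (c : ℚ) (hc : c ≠ 0) (m : ℕ) : ψ c hc (γQ m) = κ c ^ m * γQ m := by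
  simp only [γQ, map_sum, Finset.mul_sum]
  refine Finset.sum_congr rfl fun ab hab => ?_
  rw [Finset.HasAntidiagonal.mem_antidiagonal] at hab
  rw [map_div₀, map_mul, map_mul, map_pow, map_pow, ψ_s1, ψ_s2, map_natCast, map_natCast,
    mul_pow, mul_pow]
  rw [show κ c ^ ab.1 * s₁ ^ ab.1 * (κ c ^ ab.2 * s₂ ^ ab.2)
      = κ c ^ (ab.1 + ab.2) * (s₁ ^ ab.1 * s₂ ^ ab.2) by rw [pow_add]; ring, hab,
    mul_div_assoc]

/-! ### Rescaling on `MvPolynomial (Fin d) Kf` -/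

def Ψ (d : ℕ) (c : ℚ) (hc : c ≠ 0) :
    MvPolynomial (Fin d) Kf →+* MvPolynomial (Fin d) Kf :=
  eval₂Hom (C.comp (ψ c hc)) (fun j => C (κ c) * X j)

lemma Ψ_C (d : ℕ) (c : ℚ) (hc : c ≠ 0) (a : Kf) : Ψ d c hc (C a) = C (ψ c hc a) :=
  eval₂Hom_C _ _ _

lemma Ψ_X (d : ℕ) (c : ℚ) (hc : c ≠ 0) (j : Fin d) : Ψ d c hc (X j) = C (κ c) * X j :=
  eval₂Hom_X' _ _ _

lemma Ψ_powSum (d : ℕ) (c : ℚ) (hc : c ≠ 0) (n : ℕ) :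
    Ψ d c hc (powSum d n) = C (κ c ^ n) * powSum d n := by
  simp only [powSum, map_sum, Finset.mul_sum, map_pow, Ψ_X, mul_pow, map_pow]

lemma Ψ_t {d : ℕ} {t : ℕ → MvPolynomial (Fin d) Kf} (ht : IsTFamily d t)
    (c : ℚ) (hc : c ≠ 0) (k : ℕ) : Ψ d c hc (t k) = C (κ c ^ k) * t k := by
  rw [tFamily_eq ht k, map_sum, Finset.mul_sum]
  refine Finset.sum_congr rfl fun mn hmn => ?_
  rw [Finset.HasAntidiagonal.mem_antidiagonal] at hmn
  rw [map_mul, Ψ_C, Ψ_powSum, map_mul, map_inv₀, map_natCast, ψ_γQ]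
  rw [← mul_assoc, ← mul_assoc, ← map_mul, ← map_mul]
  congr 1
  rw [← hmn, pow_add]
  ring

/-! ### Scaling equation for coefficients -/

lemma Ψ_finsuppProd {d : ℕ} (c : ℚ) (hc : c ≠ 0) (t' : Fin d → MvPolynomial (Fin d) Kf)
    (hti : ∀ i : Fin d, Ψ d c hc (t' i) = C (κ c ^ (i.1 + 1)) * t' i) (τ : Fin d →₀ ℕ) :
    Ψ d c hc (τ.prod fun i k => t' i ^ k) =
      C (κ c ^ (τ.sum fun i e => (i.1 + 1) * e)) * τ.prod fun i k => t' i ^ k := by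
  rw [map_finsuppProd]
  have h1 : (τ.prod fun i k => Ψ d c hc (t' i ^ k))
      = (τ.prod fun i k => (C (κ c ^ ((i.1 + 1) * k)) : MvPolynomial (Fin d) Kf))
        * τ.prod fun i k => t' i ^ k := by
    rw [← Finsupp.prod_mul]
    refine Finsupp.prod_congr fun i _ => ?_
    rw [map_pow, hti i, mul_pow, ← map_pow, ← pow_mul]
  rw [h1]
  congr 1
  rw [Finsupp.prod, ← map_prod]
  congr 1
  rw [Finset.prod_pow_eq_pow_sum]
  rfl

lemma coeff_scale {d k : ℕ} {t : ℕ → MvPolynomial (Fin d) Kf} (ht : IsTFamily d t)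
    (hinj : Function.Injective
      (MvPolynomial.aeval (fun i : Fin d => t (i.1 + 1)) :
        MvPolynomial (Fin d) Kf →ₐ[Kf] MvPolynomial (Fin d) Kf))
    {f : MvPolynomial (Fin d) Kf}
    (hf : MvPolynomial.aeval (fun i : Fin d => t (i.1 + 1)) f = t k)
    (τ : Fin d →₀ ℕ) (c : ℚ) (hc : c ≠ 0) :
    ψ c hc (f.coeff τ) * κ c ^ (τ.sum fun i e => (i.1 + 1) * e) = κ c ^ k * f.coeff τ := by
  classical
  set t' : Fin d → MvPolynomial (Fin d) Kf := fun i => t (i.1 + 1) with ht'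
  have hti : ∀ i : Fin d, Ψ d c hc (t' i) = C (κ c ^ (i.1 + 1)) * t' i := fun i =>
    Ψ_t ht c hc (i.1 + 1)
  set g : MvPolynomial (Fin d) Kf := ∑ τ' ∈ f.support, monomial τ'
    (ψ c hc (f.coeff τ') * κ c ^ (τ'.sum fun i e => (i.1 + 1) * e)) with hg
  have key : aeval t' g = aeval t' (C (κ c ^ k) * f) := by
    have lhs : aeval t' g = Ψ d c hc (aeval t' f) := by
      conv_rhs => rw [f.as_sum, map_sum, map_sum]
      rw [hg, map_sum]
      refine Finset.sum_congr rfl fun τ' hτ' => ?_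
      rw [aeval_monomial, aeval_monomial]
      simp only [MvPolynomial.algebraMap_eq, map_mul]
      rw [Ψ_C, Ψ_finsuppProd c hc t' hti]
      ring
    rw [lhs, hf, Ψ_t ht c hc k, map_mul, aeval_C, MvPolynomial.algebraMap_eq, hf]
  have hgf : g = C (κ c ^ k) * f := hinj key
  by_cases hτ : τ ∈ f.support
  · have h2 := congrArg (MvPolynomial.coeff τ) hgf
    rw [hg] at h2
    rw [MvPolynomial.coeff_sum] at h2
    simp only [MvPolynomial.coeff_monomial] at h2
    rw [Finset.sum_ite_eq' f.support τ, if_pos hτ, MvPolynomial.coeff_C_mul] at h2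
    exact h2
  · rw [MvPolynomial.notMem_support_iff.1 hτ, map_zero, zero_mul, mul_zero]

/-! ### Homogeneity from scaling -/

lemma sum_homogeneousComponent' (P : R2) {N : ℕ} (hN : P.totalDegree < N) :
    P = ∑ j ∈ Finset.range N, homogeneousComponent j P := by
  rw [← Finset.sum_range_add_sum_Ico _ (Nat.succ_le_of_lt hN),
    MvPolynomial.sum_homogeneousComponent]
  have : ∑ j ∈ Finset.Ico (P.totalDegree + 1) N, homogeneousComponent j P = 0 := by
    refine Finset.sum_eq_zero fun j hj => ?_
    exact homogeneousComponent_eq_zero j P (by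
      rw [Finset.mem_Ico] at hj; omega)
  rw [this, add_zero]

lemma ρ_eq_sum (c : ℚ) (P : R2) {N : ℕ} (hN : P.totalDegree < N) :
    ρ c P = ∑ j ∈ Finset.range N, C (c ^ j) * homogeneousComponent j P := by
  conv_lhs => rw [sum_homogeneousComponent' P hN]
  rw [map_sum]
  exact Finset.sum_congr rfl fun j _ =>
    ρ_isHomogeneous (homogeneousComponent_isHomogeneous j P)

lemma homog_of_scaling (r : Kf) (hr : r ≠ 0) (k w : ℕ)
    (hscale : ∀ (c : ℚ) (hc : c ≠ 0),
      ψ c hc r * κ c ^ w = κ c ^ k * r) :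
    ∃ (P Q : R2) (p q : ℕ), P ≠ 0 ∧ Q ≠ 0 ∧ P.IsHomogeneous p ∧ Q.IsHomogeneous q ∧
      r = algebraMap R2 Kf P / algebraMap R2 Kf Q ∧ (p : ℤ) - (q : ℤ) = (k : ℤ) - (w : ℤ) := by
  classical
  obtain ⟨P, Q, hQmem, hPQ⟩ := IsFractionRing.div_surjective (A := R2) r
  have hQ0 : Q ≠ 0 := mem_nonZeroDivisors_iff_ne_zero.1 hQmem
  have hQK : algebraMap R2 Kf Q ≠ 0 := fun h => hQ0 (IsFractionRing.to_map_eq_zero_iff.1 h)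
  have hP0 : P ≠ 0 := by
    intro h
    rw [h, map_zero, zero_div] at hPQ
    exact hr hPQ.symm
  -- the polynomial relation for every nonzero rational c
  have hrel : ∀ (c : ℚ), c ≠ 0 → ρ c P * Q * C c ^ w = C c ^ k * (P * ρ c Q) := by
    intro c hc
    have hρQK : algebraMap R2 Kf (ρ c Q) ≠ 0 := by
      rw [Ne, IsFractionRing.to_map_eq_zero_iff]
      intro h
      exact hQ0 (ρ_inj hc (by simpa using h))
    have h1 := hscale c hc
    rw [← hPQ, map_div₀, ψ_alg, ψ_alg] at h1
    apply algR2_injective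
    have hκ : κ c = algebraMap R2 Kf (C c) := rfl
    simp only [map_mul, map_pow]
    rw [← hκ]
    field_simp at h1
    linear_combination h1
  -- package as a polynomial identity in one variable
  set N : ℕ := P.totalDegree + Q.totalDegree + 1 with hNdef
  have hPN : P.totalDegree < N := by omega
  have hQN : Q.totalDegree < N := by omega
  set F : Polynomial R2 :=
    (∑ j ∈ Finset.range N, Polynomial.monomial (j + w) (homogeneousComponent j P * Q)) -
    (∑ j ∈ Finset.range N, Polynomial.monomial (j + k) (P * homogeneousComponent j Q)) with hF
  have hFeval : ∀ (c : ℚ), c ≠ 0 → F.eval (C c) = 0 := by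
    intro c hc
    rw [hF, Polynomial.eval_sub, Polynomial.eval_finset_sum, Polynomial.eval_finset_sum,
      sub_eq_zero]
    simp only [Polynomial.eval_monomial]
    have hL : ∑ j ∈ Finset.range N, homogeneousComponent j P * Q * C c ^ (j + w)
        = ρ c P * Q * C c ^ w := by
      rw [ρ_eq_sum c P hPN, Finset.sum_mul, Finset.sum_mul]
      refine Finset.sum_congr rfl fun j _ => ?_
      rw [pow_add, map_pow]
      ring
    have hR : ∑ j ∈ Finset.range N, P * homogeneousComponent j Q * C c ^ (j + k)
        = C c ^ k * (P * ρ c Q) := by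
      rw [ρ_eq_sum c Q hQN, Finset.mul_sum, Finset.mul_sum]
      refine Finset.sum_congr rfl fun j _ => ?_
      rw [pow_add, map_pow]
      ring
    rw [hL, hR, hrel c hc]
  have hF0 : F = 0 := by
    refine Polynomial.eq_zero_of_infinite_isRoot F ?_
    refine Set.infinite_of_injective_forall_mem
      (f := fun n : ℕ => (C ((n : ℚ) + 1) : R2)) ?_ ?_
    · intro a b hab
      have := MvPolynomial.C_injective _ _ hab
      exact_mod_cast by
        have : (a : ℚ) + 1 = (b : ℚ) + 1 := this
        exact_mod_cast add_right_cancel this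
    · intro n
      exact hFeval ((n : ℚ) + 1) (by positivity)
  -- pick a nonzero homogeneous component of Q
  have hex : ∃ e, homogeneousComponent e Q ≠ 0 := by
    by_contra hcon
    push_neg at hcon
    apply hQ0
    rw [sum_homogeneousComponent' Q hQN]
    exact Finset.sum_eq_zero fun j _ => hcon j
  obtain ⟨e, he⟩ := hex
  have heN : e < N := by
    by_contra hcon
    exact he (homogeneousComponent_eq_zero e Q (by omega))
  -- extract the coefficient at e + k
  have hco := congrArg (fun (G : Polynomial R2) => G.coeff (e + k)) hF0
  simp only [hF, Polynomial.coeff_sub, Polynomial.coeff_zero, Polynomial.finset_sum_coeff,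
    Polynomial.coeff_monomial, sub_eq_zero] at hco
  have hRside : (∑ j ∈ Finset.range N, if j + k = e + k then P * homogeneousComponent j Q else 0)
      = P * homogeneousComponent e Q := by
    have : ∀ j, (j + k = e + k) = (j = e) := fun j => by
      simp [Nat.add_right_cancel_iff]
    simp only [this]
    rw [Finset.sum_ite_eq' (Finset.range N) e
      (fun j => P * homogeneousComponent j Q), if_pos (Finset.mem_range.2 heN)]
  rw [hRside] at hco
  have hPQe : P * homogeneousComponent e Q ≠ 0 :=
    mul_ne_zero hP0 he
  have hwek : w ≤ e + k := by
    by_contra hcon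
    have hz : (∑ j ∈ Finset.range N,
        if j + w = e + k then homogeneousComponent j P * Q else 0) = 0 :=
      Finset.sum_eq_zero fun j _ => if_neg (by omega)
    rw [hz] at hco
    exact hPQe hco.symm
  set p : ℕ := e + k - w with hpdef
  have hLside : (∑ j ∈ Finset.range N,
      if j + w = e + k then homogeneousComponent j P * Q else 0)
      = if p ∈ Finset.range N then homogeneousComponent p P * Q else 0 := by
    have : ∀ j, (j + w = e + k) = (j = p) := fun j => by
      simp only [eq_iff_iff]
      omega
    simp only [this]
    rw [Finset.sum_ite_eq' (Finset.range N) p (fun j => homogeneousComponent j P * Q)]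
  rw [hLside] at hco
  have hpN : p ∈ Finset.range N := by
    by_contra hcon
    rw [if_neg hcon] at hco
    exact hPQe hco.symm
  rw [if_pos hpN] at hco
  have hkey : homogeneousComponent p P * Q = P * homogeneousComponent e Q := hco
  have hPp0 : homogeneousComponent p P ≠ 0 := by
    intro h
    apply hPQe
    rw [← hkey, h, zero_mul]
  have heK : algebraMap R2 Kf (homogeneousComponent e Q) ≠ 0 := by
    rw [Ne, IsFractionRing.to_map_eq_zero_iff]; exact he
  refine ⟨homogeneousComponent p P, homogeneousComponent e Q, p, e, hPp0, he,
    homogeneousComponent_isHomogeneous p P, homogeneousComponent_isHomogeneous e Q, ?_, ?_⟩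
  · rw [← hPQ, div_eq_div_iff hQK heK, ← map_mul, ← map_mul]
    congr 1
    rw [← hkey]
  · omega

/-! ### Injectivity of substitution by the `t` family -/

lemma injective_of_surjective_ringEnd {A : Type} [CommRing A] [IsNoetherianRing A]
    (φ : A →+* A) (hs : Function.Surjective φ) : Function.Injective φ := by
  have hsn : ∀ n : ℕ, Function.Surjective (φ ^ n : A →+* A) := by
    intro n
    induction n with
    | zero => exact fun a => ⟨a, rfl⟩
    | succ n ih =>
      intro a
      obtain ⟨b, hb⟩ := hs a
      obtain ⟨c, hc⟩ := ih b
      exact ⟨c, by rw [pow_succ']; show φ ((φ ^ n) c) = a; rw [hc, hb]⟩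
  have hmono : Monotone (fun n => RingHom.ker (φ ^ n : A →+* A)) := by
    intro m n hmn
    induction n with
    | zero =>
      have : m = 0 := Nat.le_zero.1 hmn
      subst this
      exact le_refl _
    | succ n ih =>
      rcases Nat.lt_or_ge m (n+1) with h | h
      · refine le_trans (ih (by omega)) ?_
        intro x hx
        have hx' : (φ ^ n) x = 0 := hx
        show (φ ^ (n+1)) x = 0
        rw [pow_succ]
        show (φ ^ n) (φ x) = 0
        have : (φ ^ n) (φ x) = φ ((φ ^ n) x) := DFunLike.congr_fun (pow_mul_comm' φ n) x
        rw [this, hx', map_zero]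
      · have : m = n + 1 := by omega
        subst this
        exact le_refl _
  obtain ⟨n, hn⟩ := (monotone_stabilizes_iff_noetherian.2 inferInstance)
    ⟨fun n => RingHom.ker (φ ^ n : A →+* A), hmono⟩
  rw [injective_iff_map_eq_zero]
  intro a ha
  obtain ⟨b, hb⟩ := hsn n a
  have hb1 : (φ ^ (n+1)) b = 0 := by
    have h2 : (φ ^ (n+1)) b = φ ((φ ^ n) b) := by rw [pow_succ']; rfl
    rw [h2, hb, ha]
  have hmem : b ∈ RingHom.ker (φ ^ (n+1) : A →+* A) := hb1
  have heq := hn (n+1) (by omega)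
  have hmem' : b ∈ RingHom.ker (φ ^ n : A →+* A) := by
    have : RingHom.ker (φ ^ n : A →+* A) = RingHom.ker (φ ^ (n+1) : A →+* A) := heq
    rw [this]
    exact hmem
  have hzero : (φ ^ n) b = 0 := hmem'
  rw [← hb, hzero]

def eFam (d : ℕ) : Fin d → MvPolynomial (Fin d) Kf := fun i => esymm (Fin d) Kf (i.1 + 1)

lemma E_injective (d : ℕ) :
    Function.Injective (aeval (eFam d) :
      MvPolynomial (Fin d) Kf →ₐ[Kf] MvPolynomial (Fin d) Kf) := by
  intro x y h
  apply esymmAlgHom_fin_injective Kf (le_refl d)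
  apply Subtype.ext
  rw [esymmAlgHom_apply, esymmAlgHom_apply]
  exact h

lemma E_surj_symm {d : ℕ} (q : MvPolynomial (Fin d) Kf) (hq : q.IsSymmetric) :
    ∃ p : MvPolynomial (Fin d) Kf, aeval (eFam d) p = q := by
  have hqmem : q ∈ symmetricSubalgebra (Fin d) Kf := (mem_symmetricSubalgebra q).2 hq
  obtain ⟨p, hp⟩ := (esymmAlgHom_fin_bijective Kf d).2 ⟨q, hqmem⟩
  refine ⟨p, ?_⟩
  have := congrArg Subtype.val hp
  rw [esymmAlgHom_apply] at this
  exact this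

lemma powSum_eq_psum (d n : ℕ) : powSum d n = psum (Fin d) Kf n := rfl

lemma t_symm {d : ℕ} {t : ℕ → MvPolynomial (Fin d) Kf} (ht : IsTFamily d t) (k : ℕ) :
    (t k).IsSymmetric := by
  rw [tFamily_eq ht k]
  refine (mem_symmetricSubalgebra _).1 ?_
  refine Subalgebra.sum_mem _ fun mn _ => Subalgebra.mul_mem _ ?_ ?_
  · have : (C (γQ mn.1 * ((mn.2.factorial : Kf))⁻¹) : MvPolynomial (Fin d) Kf)
        = algebraMap Kf _ (γQ mn.1 * ((mn.2.factorial : Kf))⁻¹) := rfl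
    rw [this]
    exact Subalgebra.algebraMap_mem _ _
  · exact (mem_symmetricSubalgebra _).2 (by rw [powSum_eq_psum]; exact psum_isSymmetric _ _ _)

lemma aeval_t_injective {d : ℕ} (hd : 0 < d) {t : ℕ → MvPolynomial (Fin d) Kf}
    (ht : IsTFamily d t) :
    Function.Injective (aeval (fun i : Fin d => t (i.1 + 1)) :
      MvPolynomial (Fin d) Kf →ₐ[Kf] MvPolynomial (Fin d) Kf) := by
  classical
  have hGex : ∀ i : Fin d, ∃ g, aeval (eFam d) g = t (i.1 + 1) :=
    fun i => E_surj_symm _ (t_symm ht _)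
  choose G hG using hGex
  set S : Subalgebra Kf (MvPolynomial (Fin d) Kf) := Algebra.adjoin Kf (Set.range G) with hSdef
  -- power sums have preimages in S
  have hM1 : ∀ n, n ≤ d → ∃ q ∈ S, aeval (eFam d) q = powSum d n := by
    intro n
    induction n using Nat.strong_induction_on with
    | _ n ih =>
      intro hnd
      rcases Nat.eq_zero_or_pos n with h0 | hpos
      · subst h0
        refine ⟨(d : MvPolynomial (Fin d) Kf), Subalgebra.natCast_mem _ d, ?_⟩
        rw [map_natCast]
        simp [powSum]
      · have hpair : ∀ mn ∈ (antidiagonal n).erase ((0 : ℕ), n),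
            ∃ q ∈ S, aeval (eFam d) q = powSum d mn.2 := by
          intro mn hmn
          have h1 := Finset.HasAntidiagonal.mem_antidiagonal.1 (Finset.mem_of_mem_erase hmn)
          have h2 := Finset.ne_of_mem_erase hmn
          have h3 : mn.1 ≠ 0 := by
            intro h
            apply h2
            have : mn.2 = n := by omega
            exact Prod.ext h this
          exact ih mn.2 (by omega) (by omega)
        choose! qf hqfS hqfE using hpair
        set i0 : Fin d := ⟨n - 1, by omega⟩ with hi0
        refine ⟨C ((n.factorial : Kf)) * (G i0 -
          ∑ mn ∈ (antidiagonal n).erase ((0 : ℕ), n),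
            C (γQ mn.1 * ((mn.2.factorial : Kf))⁻¹) * qf mn), ?_, ?_⟩
        · refine Subalgebra.mul_mem _ ?_ (Subalgebra.sub_mem _ ?_ ?_)
          · have : (C ((n.factorial : Kf)) : MvPolynomial (Fin d) Kf)
                = algebraMap Kf _ _ := rfl
            rw [this]
            exact Subalgebra.algebraMap_mem _ _
          · exact Algebra.subset_adjoin ⟨i0, rfl⟩
          · refine Subalgebra.sum_mem _ fun mn hmn => Subalgebra.mul_mem _ ?_ (hqfS mn hmn)
            have : (C (γQ mn.1 * ((mn.2.factorial : Kf))⁻¹) : MvPolynomial (Fin d) Kf)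
                = algebraMap Kf _ _ := rfl
            rw [this]
            exact Subalgebra.algebraMap_mem _ _
        · rw [map_mul, map_sub, map_sum, aeval_C, hG i0, MvPolynomial.algebraMap_eq]
          have hi0n : (i0.1 + 1 : ℕ) = n := by
            rw [hi0]
            simp only []
            omega
          rw [hi0n]
          have hsum : ∑ mn ∈ (antidiagonal n).erase ((0 : ℕ), n),
              (aeval (eFam d)) (C (γQ mn.1 * ((mn.2.factorial : Kf))⁻¹) * qf mn)
              = ∑ mn ∈ (antidiagonal n).erase ((0 : ℕ), n),
                C (γQ mn.1 * ((mn.2.factorial : Kf))⁻¹) * powSum d mn.2 := by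
            refine Finset.sum_congr rfl fun mn hmn => ?_
            rw [map_mul, aeval_C, hqfE mn hmn]
            rfl
          rw [hsum]
          have hmem : ((0 : ℕ), n) ∈ antidiagonal n := Finset.HasAntidiagonal.mem_antidiagonal.2 (by omega)
          have htn : t n = C (((n.factorial : Kf))⁻¹) * powSum d n +
              ∑ mn ∈ (antidiagonal n).erase ((0 : ℕ), n),
                C (γQ mn.1 * ((mn.2.factorial : Kf))⁻¹) * powSum d mn.2 := by
            have h := tFamily_eq ht n
            rw [← Finset.add_sum_erase _ _ hmem] at h
            simpa [γQ_zero] using h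
          rw [htn, add_sub_cancel_right, ← mul_assoc, ← map_mul, mul_inv_cancel₀
            (Nat.cast_ne_zero.2 (Nat.factorial_ne_zero n)), map_one, one_mul]
  -- elementary symmetric polynomials have preimages in S
  have hM2 : ∀ n, 1 ≤ n → n ≤ d → ∃ q ∈ S, aeval (eFam d) q = esymm (Fin d) Kf n := by
    intro n
    induction n using Nat.strong_induction_on with
    | _ n ih =>
      intro h1n hnd
      have hnewton := psum_eq_mul_esymm_sub_sum (Fin d) Kf n (by omega)
      obtain ⟨qp, hqpS, hqpE⟩ := hM1 n hnd
      have hpair : ∀ a ∈ Finset.filter (fun a : ℕ × ℕ => a.1 ∈ Set.Ioo 0 n) (antidiagonal n),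
          ∃ q ∈ S, aeval (eFam d) q = esymm (Fin d) Kf a.1 := by
        intro a ha
        rw [Finset.mem_filter, Set.mem_Ioo] at ha
        obtain ⟨ha1, hlt0, hltn⟩ := ha
        have h4 := Finset.HasAntidiagonal.mem_antidiagonal.1 ha1
        exact ih a.1 hltn (by omega) (by omega)
      have hpair2 : ∀ a ∈ Finset.filter (fun a : ℕ × ℕ => a.1 ∈ Set.Ioo 0 n) (antidiagonal n),
          ∃ q ∈ S, aeval (eFam d) q = powSum d a.2 := by
        intro a ha
        rw [Finset.mem_filter] at ha
        have h5 := Finset.HasAntidiagonal.mem_antidiagonal.1 ha.1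
        exact hM1 a.2 (by omega)
      choose! qe hqeS hqeE using hpair
      choose! qp2 hqp2S hqp2E using hpair2
      set cn : Kf := (((-1 : Kf)) ^ (n+1) * (n : Kf))⁻¹ with hcn
      refine ⟨C cn * (qp + ∑ a ∈ Finset.filter (fun a : ℕ × ℕ => a.1 ∈ Set.Ioo 0 n)
          (antidiagonal n), (-1 : MvPolynomial (Fin d) Kf) ^ a.1 * qe a * qp2 a), ?_, ?_⟩
      · refine Subalgebra.mul_mem _ ?_ (Subalgebra.add_mem _ hqpS ?_)
        · have : (C cn : MvPolynomial (Fin d) Kf) = algebraMap Kf _ _ := rfl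
          rw [this]
          exact Subalgebra.algebraMap_mem _ _
        · refine Subalgebra.sum_mem _ fun a ha => ?_
          exact Subalgebra.mul_mem _ (Subalgebra.mul_mem _
            (Subalgebra.pow_mem _ (Subalgebra.neg_mem _ (Subalgebra.one_mem _)) _) (hqeS a ha))
            (hqp2S a ha)
      · rw [map_mul, map_add, aeval_C, hqpE, map_sum, MvPolynomial.algebraMap_eq]
        have hsum : ∑ a ∈ Finset.filter (fun a : ℕ × ℕ => a.1 ∈ Set.Ioo 0 n) (antidiagonal n),
            (aeval (eFam d)) ((-1 : MvPolynomial (Fin d) Kf) ^ a.1 * qe a * qp2 a)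
            = ∑ a ∈ Finset.filter (fun a : ℕ × ℕ => a.1 ∈ Set.Ioo 0 n) (antidiagonal n),
              (-1 : MvPolynomial (Fin d) Kf) ^ a.1 * esymm (Fin d) Kf a.1 * psum (Fin d) Kf a.2 := by
          refine Finset.sum_congr rfl fun a ha => ?_
          rw [map_mul, map_mul, map_pow, map_neg, map_one, hqeE a ha, hqp2E a ha,
            powSum_eq_psum]
        rw [hsum]
        have hps : powSum d n = psum (Fin d) Kf n := rfl
        rw [hps]
        have hkey : psum (Fin d) Kf n + ∑ a ∈ Finset.filter (fun a : ℕ × ℕ => a.1 ∈ Set.Ioo 0 n)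
            (antidiagonal n), (-1 : MvPolynomial (Fin d) Kf) ^ a.1 * esymm (Fin d) Kf a.1 *
              psum (Fin d) Kf a.2
            = (-1) ^ (n+1) * (n : MvPolynomial (Fin d) Kf) * esymm (Fin d) Kf n := by
          rw [hnewton]
          ring
        rw [hkey]
        have hC : ((-1 : MvPolynomial (Fin d) Kf)) ^ (n+1) * (n : MvPolynomial (Fin d) Kf)
              * esymm (Fin d) Kf n
            = C (((-1 : Kf)) ^ (n+1) * (n : Kf)) * esymm (Fin d) Kf n := by
          rw [map_mul, map_pow, map_neg, map_one, map_natCast]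
        have hne : ((-1 : Kf)) ^ (n+1) * (n : Kf) ≠ 0 :=
          mul_ne_zero (pow_ne_zero _ (by norm_num)) (Nat.cast_ne_zero.2 (by omega))
        rw [hC, ← mul_assoc, ← map_mul, hcn, inv_mul_cancel₀ hne, map_one, one_mul]
  -- all variables lie in S
  have hX : ∀ j : Fin d, X j ∈ S := by
    intro j
    obtain ⟨q, hqS, hqE⟩ := hM2 (j.1 + 1) (by omega) (by omega)
    have hXq : X j = q := E_injective d (by rw [aeval_X, hqE]; rfl)
    rw [hXq]
    exact hqS
  have hStop : S = ⊤ := by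
    rw [eq_top_iff]
    intro p _
    induction p using MvPolynomial.induction_on with
    | C a =>
      have : (C a : MvPolynomial (Fin d) Kf) = algebraMap Kf _ a := rfl
      rw [this]
      exact Subalgebra.algebraMap_mem S a
    | add p q hp hq => exact Subalgebra.add_mem S (hp trivial) (hq trivial)
    | mul_X p j hp => exact Subalgebra.mul_mem S (hp trivial) (hX j)
  have hSurj : Function.Surjective ⇑(aeval (R := Kf) G) := by
    intro p
    have hmem : p ∈ (aeval (R := Kf) G).range := by
      rw [← Algebra.adjoin_range_eq_range_aeval, ← hSdef, hStop]
      trivial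
    exact hmem
  have hGinj : Function.Injective ⇑(aeval (R := Kf) G) :=
    injective_of_surjective_ringEnd (aeval (R := Kf) G).toRingHom hSurj
  have hcomp : ∀ p : MvPolynomial (Fin d) Kf,
      aeval (fun i : Fin d => t (i.1 + 1)) p = aeval (eFam d) (aeval (R := Kf) G p) := by
    intro p
    have h := MvPolynomial.comp_aeval (f := G)
      (φ := (aeval (eFam d) : MvPolynomial (Fin d) Kf →ₐ[Kf] MvPolynomial (Fin d) Kf))
    have h2 : (fun i : Fin d => aeval (eFam d) (G i)) = fun i : Fin d => t (i.1 + 1) := by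
      funext i
      exact hG i
    rw [h2] at h
    have := congrArg (fun (φ : MvPolynomial (Fin d) Kf →ₐ[Kf] MvPolynomial (Fin d) Kf) => φ p) h
    simpa using this.symm
  intro x y hxy
  apply hGinj
  apply E_injective d
  rw [← hcomp x, ← hcomp y]
  exact hxy

end Stmt5Aux

/-- Homogeneity of the coefficients of the reduction polynomials: if `k > d > 0` and
`f(𝔱₁,…,𝔱_d) = 𝔱_k`, then every nonzero coefficient of `f` at a monomial
`y₁^{σ₁} ⋯ y_d^{σ_d}` is a homogeneous rational function in `s₁, s₂` of degree
`k − Σ i·σ_i`. -/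
theorem stmt5 (d : ℕ) (hd : 0 < d) (t : ℕ → MvPolynomial (Fin d) Kf)
    (ht : IsTFamily d t) (k : ℕ) (hk : d < k)
    (f : MvPolynomial (Fin d) Kf)
    (hf : MvPolynomial.aeval (fun i : Fin d => t (i.val + 1)) f = t k)
    (σ : Fin d →₀ ℕ) (hσ : f.coeff σ ≠ 0) :
    ∃ (P Q : MvPolynomial (Fin 2) ℚ) (p q : ℕ),
      P ≠ 0 ∧ Q ≠ 0 ∧ P.IsHomogeneous p ∧ Q.IsHomogeneous q ∧
      f.coeff σ = algebraMap (MvPolynomial (Fin 2) ℚ) Kf P /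
        algebraMap (MvPolynomial (Fin 2) ℚ) Kf Q ∧
      (p : ℤ) - (q : ℤ) = (k : ℤ) - ∑ i : Fin d, ((i.val : ℤ) + 1) * (σ i : ℤ) := by
  classical
  set w : ℕ := σ.sum (fun i e => (i.1 + 1) * e) with hw
  have hinj := Stmt5Aux.aeval_t_injective hd ht
  have hscale : ∀ (c : ℚ) (hc : c ≠ 0),
      Stmt5Aux.ψ c hc (f.coeff σ) * Stmt5Aux.κ c ^ w = Stmt5Aux.κ c ^ k * f.coeff σ :=
    fun c hc => Stmt5Aux.coeff_scale ht hinj hf σ c hc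
  obtain ⟨P, Q, p, q, hP, hQ, hPh, hQh, hr, hdeg⟩ :=
    Stmt5Aux.homog_of_scaling (f.coeff σ) hσ k w hscale
  refine ⟨P, Q, p, q, hP, hQ, hPh, hQh, hr, ?_⟩
  rw [hdeg]
  congr 1
  have hws : w = ∑ i : Fin d, (i.1 + 1) * σ i :=
    Finsupp.sum_fintype _ _ (fun i => by simp)
  rw [hws]
  push_cast
  rfl
end
end
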